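/- Let f ∈ C²(ℝ₊,ℝ). The function g(C) = f(det C) is convex on the set PSym(n) of real symmetric positive definite n×n matrices if and only if for all C ∈ PSym(n) and all symmetric n×n matrices H one has [f''(det C)·det(C) + f'(det C)]·⟨C⁻¹,H⟩² − f'(det C)·⟨HC⁻¹, C⁻¹H⟩ ≥ 0. -/

import Mathlib

open Matrix

/-- The trace inner product `⟨A, B⟩ = tr (A Bᵀ)` on real `n × n` matrices. -/
noncomputable def tinner {n : ℕ} (A B : Matrix (Fin n) (Fin n) ℝ) : ℝ :=
  (A * Bᵀ).trace

/-!
Convexity of `C ↦ f (det C)` on the convex set `PSym(n)` amounts to convexity of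
`φ t = f (det (C + t H))` on every line through `C ∈ PSym(n)` with symmetric direction `H`.
Jacobi's formula `(det (C + t H))' = det (C + t H) tr ((C + t H)⁻¹ H)` together with
`((C + t H)⁻¹)' = -(C + t H)⁻¹ H (C + t H)⁻¹` shows that `φ'' 0` is `det C` times the quantity
of the theorem, so everything reduces to the one-variable criterion `φ'' ≥ 0`. In the forward
direction this needs `C + t H` to stay positive definite for small `|t|`.
-/

open Filter Topology Set

section ConvexLines

variable {𝕜 E β : Type*} [Field 𝕜] [LinearOrder 𝕜]
  [AddCommGroup E] [Module 𝕜 E] [AddCommMonoid β] [PartialOrder β] [Module 𝕜 β]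
  {s : Set E} {g : E → β}

theorem ConvexOn.comp_add_smul (hg : ConvexOn 𝕜 s g) (x v : E) :
    ConvexOn 𝕜 {t : 𝕜 | x + t • v ∈ s} (fun t => g (x + t • v)) := by
  have hline : ∀ t : 𝕜, AffineMap.lineMap x (x + v) t = x + t • v := fun t => by
    rw [AffineMap.lineMap_apply_module', add_sub_cancel_left, add_comm]
  simpa only [Set.preimage, Function.comp_def, hline] using
    hg.comp_affineMap (AffineMap.lineMap x (x + v))

variable [IsStrictOrderedRing 𝕜] in
theorem convexOn_of_forall_convexOn_Icc (hs : Convex 𝕜 s)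
    (h : ∀ x ∈ s, ∀ y ∈ s, ConvexOn 𝕜 (Icc (0 : 𝕜) 1) (fun t => g (x + t • (y - x)))) :
    ConvexOn 𝕜 s g := by
  refine ⟨hs, fun x hx y hy a b ha hb hab => ?_⟩
  have key := (h x hx y hy).2 (left_mem_Icc.2 zero_le_one) (right_mem_Icc.2 zero_le_one) ha hb hab
  have hxy : a • x + b • y = x + b • (y - x) := by
    rw [eq_sub_of_add_eq hab, smul_sub, sub_smul, one_smul]
    abel
  simpa [hxy] using key

end ConvexLines

theorem ConvexOn.nonneg_of_hasDerivAt2 {U : Set ℝ} {φ φ' : ℝ → ℝ} {x a : ℝ}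
    (hφ : ConvexOn ℝ U φ) (hU : IsOpen U) (hx : x ∈ U)
    (hφ' : ∀ y ∈ U, HasDerivAt φ (φ' y) y) (hφ'' : HasDerivAt φ' a x) : 0 ≤ a := by
  have hmono : MonotoneOn φ' U :=
    (hφ.monotoneOn_deriv fun y hy => (hφ' y hy).differentiableAt).congr
      fun y hy => (hφ' y hy).deriv
  have hacc : AccPt x (𝓟 U) := accPt_iff_frequently_nhdsNE.2
    (eventually_nhdsWithin_of_eventually_nhds (hU.mem_nhds hx)).frequently
  exact hφ''.hasDerivWithinAt.nonneg_of_monotoneOn hacc hmono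

theorem ContDiffOn.differentiableOn_deriv_of_isOpen {𝕜 F : Type*} [NontriviallyNormedField 𝕜]
    [NormedAddCommGroup F] [NormedSpace 𝕜 F] {f : 𝕜 → F} {s : Set 𝕜}
    (hf : ContDiffOn 𝕜 2 f s) (hs : IsOpen s) : DifferentiableOn 𝕜 (deriv f) s :=
  (hf.deriv_of_isOpen hs (m := 1) (by norm_num)).differentiableOn
    one_ne_zero

section PosDef

variable {m : Type*} {C H : Matrix m m ℝ}

theorem Matrix.convex_setOf_posDef : Convex ℝ {C : Matrix m m ℝ | C.PosDef} :=
  convex_iff_forall_pos.2 fun _ hx _ hy _ _ ha hb _ => (hx.smul ha).add (hy.smul hb)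

variable [Fintype m]

/-- The quadratic form of `C + t H` is positive on the unit sphere for `t` near `0`, by
compactness of the sphere, and hence positive on all nonzero vectors by homogeneity. -/
theorem Matrix.PosDef.eventually_posDef_add_smul (hC : C.PosDef) (hH : H.IsHermitian) :
    ∀ᶠ t in 𝓝 (0 : ℝ), (C + t • H).PosDef := by
  let Q : ℝ → (m → ℝ) → ℝ := fun t y => y ⬝ᵥ ((C + t • H) *ᵥ y)
  have hQ : Continuous fun p : ℝ × (m → ℝ) => Q p.1 p.2 := by
    simp only [Q, dotProduct, mulVec]
    fun_prop
  have hsphere : ∀ᶠ t in 𝓝 0, ∀ y ∈ Metric.sphere (0 : m → ℝ) 1, 0 < Q t y := by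
    refine (isCompact_sphere 0 1).eventually_forall_of_forall_eventually fun y hy => ?_
    refine hQ.continuousAt.eventually (lt_mem_nhds ?_)
    simpa [Q] using hC.dotProduct_mulVec_pos (ne_zero_of_mem_unit_sphere ⟨y, hy⟩)
  filter_upwards [hsphere] with t ht
  refine .of_dotProduct_mulVec_pos (hC.1.add (hH.smul (.all t))) fun x hx => ?_
  have hx' : 0 < ‖x‖ := norm_pos_iff.2 hx
  have hy := ht (‖x‖⁻¹ • x) (by simp [norm_smul, hx'.ne'])
  simp only [Q, mulVec_smul, dotProduct_smul, smul_dotProduct, smul_eq_mul] at hy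
  rw [star_trivial]
  exact pos_of_mul_pos_right (pos_of_mul_pos_right hy (by positivity)) (by positivity)

theorem Matrix.isOpen_setOf_posDef_add_smul (C : Matrix m m ℝ) (hH : H.IsHermitian) :
    IsOpen {t : ℝ | (C + t • H).PosDef} := by
  refine isOpen_iff_mem_nhds.2 fun t₀ (ht₀ : (C + t₀ • H).PosDef) => ?_
  have hshift : Tendsto (fun t => t - t₀) (𝓝 t₀) (𝓝 0) := tendsto_sub_nhds_zero_iff.2 tendsto_id
  filter_upwards [hshift.eventually (ht₀.eventually_posDef_add_smul hH)] with t ht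
  rwa [add_assoc, ← add_smul, add_sub_cancel] at ht

end PosDef

section DetLine

open Polynomial

variable {𝕜 : Type*} [NontriviallyNormedField 𝕜] {m : Type*} [Fintype m] [DecidableEq m]

theorem Matrix.hasDerivAt_det_one_add_smul (K : Matrix m m 𝕜) :
    HasDerivAt (fun s : 𝕜 => (1 + s • K).det) K.trace 0 := by
  have h := (det (1 + (X : 𝕜[X]) • K.map C)).hasDerivAt 0
  rw [derivative_det_one_add_X_smul] at h
  convert h using 1
  ext s
  rw [eval_det]
  congr 1
  ext i j
  simp [Matrix.one_apply, matPolyEquiv_map_C, mul_comm]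

theorem Matrix.hasDerivAt_det_add_smul (A B : Matrix m m 𝕜) {t : 𝕜}
    (h : IsUnit (A + t • B).det) :
    HasDerivAt (fun s : 𝕜 => (A + s • B).det)
      ((A + t • B).det * ((A + t • B)⁻¹ * B).trace) t := by
  have hline : (fun s : 𝕜 => (A + s • B).det) =
      fun s => (A + t • B).det * (1 + (s - t) • ((A + t • B)⁻¹ * B)).det := by
    ext s
    rw [← det_mul, mul_add, mul_one, mul_smul_comm, mul_nonsing_inv_cancel_left _ B h, sub_smul]
    abel_nf
  have hshift := HasDerivAt.comp_sub_const (f := fun s : 𝕜 => (1 + s • ((A + t • B)⁻¹ * B)).det)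
    t t (by rw [sub_self]; exact hasDerivAt_det_one_add_smul _)
  rw [hline]
  exact hshift.const_mul _

theorem Matrix.hasDerivAt_trace_inv_add_smul_mul (A B : Matrix m m 𝕜) {t : 𝕜}
    (h : IsUnit (A + t • B).det) :
    HasDerivAt (fun s : 𝕜 => ((A + s • B)⁻¹ * B).trace)
      (-((A + t • B)⁻¹ * B * ((A + t • B)⁻¹ * B)).trace) t := by
  have hinv : ContinuousAt (fun s : 𝕜 => (A + s • B)⁻¹) t := by
    refine (continuousAt_matrix_inv _ ?_).comp (by fun_prop)
    rw [Ring.inverse_eq_inv']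
    exact continuousAt_inv₀ h.ne_zero
  have hdet : ∀ᶠ s in 𝓝 t, IsUnit (A + s • B).det := by
    have : ContinuousAt (fun s : 𝕜 => (A + s • B).det) t := by fun_prop
    exact (this.eventually_ne h.ne_zero).mono fun s hs => hs.isUnit
  have hslope : ∀ᶠ s in 𝓝[≠] t, -((A + s • B)⁻¹ * B * ((A + t • B)⁻¹ * B)).trace =
      slope (fun s : 𝕜 => ((A + s • B)⁻¹ * B).trace) t s := by
    filter_upwards [nhdsWithin_le_nhds hdet, self_mem_nhdsWithin] with s hs hst
    have hunit : IsUnit (A + s • B) ↔ IsUnit (A + t • B) := by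
      simp only [isUnit_iff_isUnit_det, hs, h]
    rw [slope_def_field, eq_div_iff (sub_ne_zero.mpr hst), ← trace_sub, ← sub_mul,
      inv_sub_inv hunit, add_sub_add_left_eq_sub, ← sub_smul]
    simp only [mul_smul_comm, smul_mul_assoc, trace_smul, smul_eq_mul, mul_assoc]
    ring
  rw [hasDerivAt_iff_tendsto_slope]
  refine Tendsto.congr' hslope ?_
  have hF : Continuous fun X : Matrix m m 𝕜 => -(X * B * ((A + t • B)⁻¹ * B)).trace := by
    fun_prop
  exact (hF.continuousAt.comp hinv).tendsto.mono_left nhdsWithin_le_nhds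

end DetLine

section CompDet

variable {m : Type*} [Fintype m] [DecidableEq m]

/-- `det C * detSecondVariation f C H` is the second derivative of `t ↦ f (det (C + t H))` at
`t = 0`. -/
noncomputable def detSecondVariation (f : ℝ → ℝ) (C H : Matrix m m ℝ) : ℝ :=
  (deriv (deriv f) C.det * C.det + deriv f C.det) * (C⁻¹ * H).trace ^ 2 -
    deriv f C.det * (C⁻¹ * H * (C⁻¹ * H)).trace

variable {f : ℝ → ℝ} (A B : Matrix m m ℝ) {t : ℝ}

theorem hasDerivAt_comp_det_add_smul (hf : DifferentiableAt ℝ f (A + t • B).det)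
    (h : IsUnit (A + t • B).det) :
    HasDerivAt (fun s => f (A + s • B).det)
      (deriv f (A + t • B).det * ((A + t • B).det * ((A + t • B)⁻¹ * B).trace)) t :=
  hf.hasDerivAt.comp t (hasDerivAt_det_add_smul A B h)

theorem hasDerivAt_deriv_comp_det_add_smul (hf : DifferentiableAt ℝ (deriv f) (A + t • B).det)
    (h : IsUnit (A + t • B).det) :
    HasDerivAt (fun s => deriv f (A + s • B).det * ((A + s • B).det * ((A + s • B)⁻¹ * B).trace))
      ((A + t • B).det * detSecondVariation f (A + t • B) B) t := by
  have hdet := hasDerivAt_det_add_smul A B h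
  have := (hf.hasDerivAt.comp t hdet).mul (hdet.mul (hasDerivAt_trace_inv_add_smul_mul A B h))
  refine this.congr_deriv ?_
  simp only [detSecondVariation, Pi.mul_apply, Function.comp_apply]
  ring

theorem ConvexOn.detSecondVariation_nonneg (hf : ContDiffOn ℝ 2 f (Ioi 0))
    (hconv : ConvexOn ℝ {C : Matrix m m ℝ | C.PosDef} (fun C => f C.det)) {C H : Matrix m m ℝ}
    (hC : C.PosDef) (hH : H.IsHermitian) : 0 ≤ detSecondVariation f C H := by
  have hC₀ : (C + (0 : ℝ) • H).PosDef := by rwa [zero_smul, add_zero]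
  have key := (hconv.comp_add_smul C H).nonneg_of_hasDerivAt2
    (isOpen_setOf_posDef_add_smul C hH) hC₀
    (fun s hs => hasDerivAt_comp_det_add_smul C H
      ((hf.differentiableOn two_ne_zero).differentiableAt (Ioi_mem_nhds hs.det_pos))
      hs.det_pos.ne'.isUnit)
    (hasDerivAt_deriv_comp_det_add_smul C H
      ((hf.differentiableOn_deriv_of_isOpen isOpen_Ioi).differentiableAt
        (Ioi_mem_nhds hC₀.det_pos)) hC₀.det_pos.ne'.isUnit)
  rw [zero_smul, add_zero] at key
  exact nonneg_of_mul_nonneg_right key hC.det_pos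

theorem convexOn_comp_det_of_detSecondVariation_nonneg (hf : ContDiffOn ℝ 2 f (Ioi 0))
    (hcond : ∀ C H : Matrix m m ℝ, C.PosDef → H.IsHermitian → 0 ≤ detSecondVariation f C H) :
    ConvexOn ℝ {C : Matrix m m ℝ | C.PosDef} (fun C => f C.det) := by
  refine convexOn_of_forall_convexOn_Icc convex_setOf_posDef fun C₁ h₁ C₂ h₂ => ?_
  have hpos : ∀ t ∈ Icc (0 : ℝ) 1, (C₁ + t • (C₂ - C₁)).PosDef := fun t ht =>
    convex_setOf_posDef.add_smul_sub_mem h₁ h₂ ht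
  have hφ' := fun t ht => hasDerivAt_comp_det_add_smul C₁ (C₂ - C₁)
    ((hf.differentiableOn two_ne_zero).differentiableAt (Ioi_mem_nhds (hpos t ht).det_pos))
    (hpos t ht).det_pos.ne'.isUnit
  have hφ'' := fun t ht => hasDerivAt_deriv_comp_det_add_smul C₁ (C₂ - C₁)
    ((hf.differentiableOn_deriv_of_isOpen isOpen_Ioi).differentiableAt
      (Ioi_mem_nhds (hpos t ht).det_pos)) (hpos t ht).det_pos.ne'.isUnit
  refine convexOn_of_hasDerivWithinAt2_nonneg (convex_Icc 0 1)
    (fun t ht => (hφ' t ht).continuousAt.continuousWithinAt)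
    (fun t ht => (hφ' t (interior_subset ht)).hasDerivWithinAt)
    (fun t ht => (hφ'' t (interior_subset ht)).hasDerivWithinAt) fun t ht => ?_
  have hPt := hpos t (interior_subset ht)
  exact mul_nonneg hPt.det_pos.le (hcond _ _ hPt (h₂.1.sub h₁.1))

end CompDet

theorem detSecondVariation_eq_tinner {n : ℕ} (f : ℝ → ℝ) {C H : Matrix (Fin n) (Fin n) ℝ}
    (hC : C.IsSymm) (hH : H.IsSymm) :
    detSecondVariation f C H = (deriv (deriv f) C.det * C.det + deriv f C.det) *
      (tinner C⁻¹ H) ^ 2 - deriv f C.det * tinner (H * C⁻¹) (C⁻¹ * H) := by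
  have h₁ : tinner C⁻¹ H = (C⁻¹ * H).trace := by rw [tinner, hH.eq]
  have h₂ : tinner (H * C⁻¹) (C⁻¹ * H) = (C⁻¹ * H * (C⁻¹ * H)).trace := by
    rw [tinner, transpose_mul, hH.eq, transpose_nonsing_inv, hC.eq, ← mul_assoc, trace_mul_comm]
    simp only [mul_assoc]
  rw [detSecondVariation, h₁, h₂]

theorem convexOn_f_det_iff_second_deriv_cond (n : ℕ) (f : ℝ → ℝ)
    (hf : ContDiffOn ℝ 2 f (Set.Ioi 0)) :
    ConvexOn ℝ {C : Matrix (Fin n) (Fin n) ℝ | C.PosDef} (fun C => f C.det) ↔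
      ∀ C : Matrix (Fin n) (Fin n) ℝ, C.PosDef →
        ∀ H : Matrix (Fin n) (Fin n) ℝ, H.IsSymm →
          0 ≤ (deriv (deriv f) C.det * C.det + deriv f C.det) * (tinner C⁻¹ H) ^ 2 -
              deriv f C.det * tinner (H * C⁻¹) (C⁻¹ * H) := by
  have hsymm : ∀ {C : Matrix (Fin n) (Fin n) ℝ}, C.PosDef → C.IsSymm := fun hC =>
    isHermitian_iff_isSymm.1 hC.1
  constructor
  · intro hconv C hC H hH
    rw [← detSecondVariation_eq_tinner f (hsymm hC) hH]
    exact hconv.detSecondVariation_nonneg hf hC (isHermitian_iff_isSymm.2 hH)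
  · intro hcond
    refine convexOn_comp_det_of_detSecondVariation_nonneg hf fun C H hC hH => ?_
    have hH' := isHermitian_iff_isSymm.1 hH
    rw [detSecondVariation_eq_tinner f (hsymm hC) hH']
    exact hcond C hC H hH'
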